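/- Let γ ∈ (0,1), K a bounded γ-Hölder probability density, F C¹ with bounded Lipschitz derivative, and φ(f) := f·F(K*f). Then φ maps C^γ ∩ L¹(ℝ^d) into itself and there is a constant C (depending on F, K, γ, d) with ‖φ(f)‖_{C^γ} ≤ C ‖f‖_{C^γ} (1 + ‖f‖_{L¹}) for all f ∈ C^γ ∩ L¹. -/

import Mathlib

open MeasureTheory Real Filter

abbrev Euc (d : ℕ) := EuclideanSpace ℝ (Fin d)

noncomputable def supN {E : Type*} (f : E → ℝ) : ℝ := ⨆ x, |f x|

noncomputable def holdS {E : Type*} [NormedAddCommGroup E] (γ : ℝ) (f : E → ℝ) : ℝ :=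
  ⨆ p : E × E, |f p.1 - f p.2| / ‖p.1 - p.2‖ ^ γ

noncomputable def cNorm {E : Type*} [NormedAddCommGroup E] (γ : ℝ) (f : E → ℝ) : ℝ :=
  supN f + holdS γ f

def IsHolderBdd {E : Type*} [NormedAddCommGroup E] (γ : ℝ) (f : E → ℝ) : Prop :=
  BddAbove (Set.range fun x => |f x|) ∧
  BddAbove (Set.range fun p : E × E => |f p.1 - f p.2| / ‖p.1 - p.2‖ ^ γ)

/-! The Hölder quotient of `K (· - z)` does not depend on `z`, so `K * f` is bounded by
`‖K‖_∞ ‖f‖_{L¹}` and `γ`-Hölder with constant `[K]_γ ‖f‖_{L¹}`. Since `F` is Lipschitz with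
constant `sup |F'|`, the same holds for `F (K * f)` up to the additive constant `|F 0|`, and the
Leibniz estimate `[u v]_γ ≤ [u]_γ ‖v‖_∞ + ‖u‖_∞ [v]_γ` bounds `φ f`. Integrability holds because
`φ f` is `f` times a bounded continuous function. -/

open Topology

section HolderSeminorm

variable {E : Type*} {f : E → ℝ}

lemma abs_le_supN (hf : BddAbove (Set.range fun x => |f x|)) (x : E) : |f x| ≤ supN f :=
  le_ciSup hf x

lemma supN_nonneg : 0 ≤ supN f :=
  Real.iSup_nonneg fun _ => abs_nonneg _

variable [NormedAddCommGroup E] {γ A H : ℝ}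

lemma holdS_nonneg : 0 ≤ holdS γ f :=
  Real.iSup_nonneg fun _ => div_nonneg (abs_nonneg _) (rpow_nonneg (norm_nonneg _) _)

lemma abs_sub_le_holdS_mul
    (hf : BddAbove (Set.range fun p : E × E => |f p.1 - f p.2| / ‖p.1 - p.2‖ ^ γ)) (x y : E) :
    |f x - f y| ≤ holdS γ f * ‖x - y‖ ^ γ := by
  rcases eq_or_ne x y with rfl | hxy
  · simpa using mul_nonneg holdS_nonneg (rpow_nonneg le_rfl γ)
  · exact (div_le_iff₀ (rpow_pos_of_pos (norm_pos_iff.2 (sub_ne_zero.2 hxy)) γ)).1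
      (le_ciSup hf (x, y))

lemma div_rpow_le_of_abs_sub_le (hH0 : 0 ≤ H) (hH : ∀ x y, |f x - f y| ≤ H * ‖x - y‖ ^ γ)
    (p : E × E) : |f p.1 - f p.2| / ‖p.1 - p.2‖ ^ γ ≤ H := by
  obtain ⟨x, y⟩ := p
  rcases eq_or_ne x y with rfl | hxy
  · simpa using hH0
  · exact (div_le_iff₀ (rpow_pos_of_pos (norm_pos_iff.2 (sub_ne_zero.2 hxy)) γ)).2 (hH x y)

lemma isHolderBdd_of_le (hA : ∀ x, |f x| ≤ A) (hH0 : 0 ≤ H)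
    (hH : ∀ x y, |f x - f y| ≤ H * ‖x - y‖ ^ γ) : IsHolderBdd γ f :=
  ⟨⟨A, Set.forall_mem_range.2 hA⟩, ⟨H, Set.forall_mem_range.2 (div_rpow_le_of_abs_sub_le hH0 hH)⟩⟩

lemma cNorm_le_of_le (hA0 : 0 ≤ A) (hA : ∀ x, |f x| ≤ A) (hH0 : 0 ≤ H)
    (hH : ∀ x y, |f x - f y| ≤ H * ‖x - y‖ ^ γ) : cNorm γ f ≤ A + H :=
  add_le_add (Real.iSup_le hA hA0) (Real.iSup_le (div_rpow_le_of_abs_sub_le hH0 hH) hH0)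

lemma continuous_of_abs_sub_le_mul_rpow (hγ : 0 < γ)
    (hH : ∀ x y, |f x - f y| ≤ H * ‖x - y‖ ^ γ) : Continuous f := by
  refine continuous_iff_continuousAt.2 fun x₀ => tendsto_sub_nhds_zero_iff.1 ?_
  have hdist : Tendsto (fun x => ‖x - x₀‖) (𝓝 x₀) (𝓝 0) :=
    tendsto_iff_norm_sub_tendsto_zero.1 tendsto_id
  have hbound : Tendsto (fun x => H * ‖x - x₀‖ ^ γ) (𝓝 x₀) (𝓝 0) := by
    simpa [zero_rpow hγ.ne', Function.comp_def] using
      ((continuousAt_rpow_const 0 γ (Or.inr hγ.le)).const_mul H).tendsto.comp hdist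
  exact squeeze_zero_norm (fun x => by simpa only [Real.norm_eq_abs] using hH x x₀) hbound

lemma abs_mul_sub_mul_le {u v : E → ℝ} {A B Hu Hv : ℝ} (hu : ∀ x, |u x| ≤ A)
    (huH : ∀ x y, |u x - u y| ≤ Hu * ‖x - y‖ ^ γ) (hv : ∀ x, |v x| ≤ B)
    (hvH : ∀ x y, |v x - v y| ≤ Hv * ‖x - y‖ ^ γ) (x y : E) :
    |u x * v x - u y * v y| ≤ (Hu * B + A * Hv) * ‖x - y‖ ^ γ :=
  calc |u x * v x - u y * v y| = |(u x - u y) * v x + u y * (v x - v y)| := by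
        congr 1; ring
    _ ≤ |u x - u y| * |v x| + |u y| * |v x - v y| := by
        rw [← abs_mul, ← abs_mul]; exact abs_add_le _ _
    _ ≤ Hu * ‖x - y‖ ^ γ * B + A * (Hv * ‖x - y‖ ^ γ) :=
        add_le_add (mul_le_mul (huH x y) (hv x) (abs_nonneg _) ((abs_nonneg _).trans (huH x y)))
          (mul_le_mul (hu y) (hvH x y) (abs_nonneg _) ((abs_nonneg _).trans (hu y)))
    _ = (Hu * B + A * Hv) * ‖x - y‖ ^ γ := by ring

end HolderSeminorm

lemma abs_integral_mul_le {α : Type*} [MeasurableSpace α] {μ : Measure α} {k f : α → ℝ} {B : ℝ}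
    (hk : ∀ z, |k z| ≤ B) (hf : Integrable f μ) :
    |∫ z, k z * f z ∂μ| ≤ B * ∫ z, |f z| ∂μ := by
  rw [← integral_const_mul B (fun z => |f z|), ← Real.norm_eq_abs]
  refine norm_integral_le_of_norm_le (hf.abs.const_mul B) (ae_of_all _ fun z => ?_)
  rw [Real.norm_eq_abs, abs_mul]
  exact mul_le_mul_of_nonneg_right (hk z) (abs_nonneg _)

section KernelIntegral

variable {E : Type*} [NormedAddCommGroup E] [MeasurableSpace E] [MeasurableAdd E] [MeasurableNeg E]
  {μ : Measure E} [μ.IsAddLeftInvariant] [μ.IsNegInvariant] {K f : E → ℝ}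

lemma integrable_comp_sub_mul (hKm : AEStronglyMeasurable K μ)
    (hK : BddAbove (Set.range fun x => |K x|)) (hf : Integrable f μ) (x : E) :
    Integrable (fun z => K (x - z) * f z) μ :=
  hf.bdd_mul (hKm.comp_measurePreserving (μ.measurePreserving_sub_left x))
    (ae_of_all _ fun z => abs_le_supN hK (x - z))

lemma abs_integral_comp_sub_mul_sub_le {γ : ℝ} (hKm : AEStronglyMeasurable K μ)
    (hK : IsHolderBdd γ K) (hf : Integrable f μ) (x y : E) :
    |∫ z, K (x - z) * f z ∂μ - ∫ z, K (y - z) * f z ∂μ| ≤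
      holdS γ K * (∫ z, |f z| ∂μ) * ‖x - y‖ ^ γ := by
  rw [← integral_sub (integrable_comp_sub_mul hKm hK.1 hf x)
    (integrable_comp_sub_mul hKm hK.1 hf y)]
  simp_rw [← sub_mul]
  calc |∫ z, (K (x - z) - K (y - z)) * f z ∂μ|
      ≤ holdS γ K * ‖x - y‖ ^ γ * ∫ z, |f z| ∂μ :=
        abs_integral_mul_le (fun z => by
          simpa using abs_sub_le_holdS_mul hK.2 (x - z) (y - z)) hf
    _ = holdS γ K * (∫ z, |f z| ∂μ) * ‖x - y‖ ^ γ := by ring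

end KernelIntegral

lemma abs_sub_le_of_abs_deriv_le {F : ℝ → ℝ} {M : ℝ} (hF : Differentiable ℝ F)
    (hM : ∀ x, |deriv F x| ≤ M) (a b : ℝ) : |F a - F b| ≤ M * |a - b| := by
  simpa only [Real.norm_eq_abs] using
    convex_univ.norm_image_sub_le_of_norm_deriv_le (fun x _ => hF x) (fun x _ => hM x)
      (Set.mem_univ b) (Set.mem_univ a)

section Composition

variable {E : Type*} {G Hg M : ℝ} {f g : E → ℝ} {F : ℝ → ℝ}

lemma abs_comp_le (hF : ∀ a b, |F a - F b| ≤ M * |a - b|) (hM : 0 ≤ M)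
    (hg : ∀ x, |g x| ≤ G) (x : E) : |F (g x)| ≤ |F 0| + M * G := by
  have := abs_sub_abs_le_abs_sub (F (g x)) (F 0)
  have := (hF (g x) 0).trans (mul_le_mul_of_nonneg_left (by simpa using hg x) hM)
  linarith

lemma abs_mul_comp_le (hF : ∀ a b, |F a - F b| ≤ M * |a - b|) (hM : 0 ≤ M)
    (hf : BddAbove (Set.range fun x => |f x|)) (hg : ∀ x, |g x| ≤ G) (x : E) :
    |f x * F (g x)| ≤ supN f * (|F 0| + M * G) := by
  rw [abs_mul]
  exact mul_le_mul (abs_le_supN hf x) (abs_comp_le hF hM hg x) (abs_nonneg _) supN_nonneg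

variable [NormedAddCommGroup E] {γ : ℝ}

lemma abs_mul_comp_sub_mul_comp_le (hF : ∀ a b, |F a - F b| ≤ M * |a - b|) (hM : 0 ≤ M)
    (hf : IsHolderBdd γ f) (hg : ∀ x, |g x| ≤ G) (hgH : ∀ x y, |g x - g y| ≤ Hg * ‖x - y‖ ^ γ)
    (x y : E) :
    |f x * F (g x) - f y * F (g y)| ≤
      (holdS γ f * (|F 0| + M * G) + supN f * (M * Hg)) * ‖x - y‖ ^ γ :=
  abs_mul_sub_mul_le (abs_le_supN hf.1) (abs_sub_le_holdS_mul hf.2) (abs_comp_le hF hM hg)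
    (fun x y => (hF _ _).trans ((mul_le_mul_of_nonneg_left (hgH x y) hM).trans_eq (by ring))) x y

lemma isHolderBdd_mul_comp (hF : ∀ a b, |F a - F b| ≤ M * |a - b|) (hM : 0 ≤ M)
    (hf : IsHolderBdd γ f) (hg : ∀ x, |g x| ≤ G) (hgH : ∀ x y, |g x - g y| ≤ Hg * ‖x - y‖ ^ γ)
    (hG : 0 ≤ G) (hHg : 0 ≤ Hg) : IsHolderBdd γ (fun x => f x * F (g x)) :=
  have : 0 ≤ supN f := supN_nonneg
  have : 0 ≤ holdS γ f := holdS_nonneg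
  isHolderBdd_of_le (abs_mul_comp_le hF hM hf.1 hg) (by positivity)
    (abs_mul_comp_sub_mul_comp_le hF hM hf hg hgH)

lemma cNorm_mul_comp_le (hF : ∀ a b, |F a - F b| ≤ M * |a - b|) (hM : 0 ≤ M)
    (hf : IsHolderBdd γ f) (hg : ∀ x, |g x| ≤ G) (hgH : ∀ x y, |g x - g y| ≤ Hg * ‖x - y‖ ^ γ)
    (hG : 0 ≤ G) (hHg : 0 ≤ Hg) :
    cNorm γ (fun x => f x * F (g x)) ≤ cNorm γ f * (|F 0| + M * G + M * Hg) := by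
  have hA : 0 ≤ supN f := supN_nonneg
  have hH : 0 ≤ holdS γ f := holdS_nonneg
  refine (cNorm_le_of_le (by positivity) (abs_mul_comp_le hF hM hf.1 hg) (by positivity)
    (abs_mul_comp_sub_mul_comp_le hF hM hf hg hgH)).trans ?_
  unfold cNorm
  nlinarith [mul_nonneg (mul_nonneg hH hM) hHg]

end Composition

theorem stmt17_general {d : ℕ} (γ : ℝ) (hγ : γ ∈ Set.Ioo (0:ℝ) 1)
    (K : Euc d → ℝ) (hKint : Integrable K)
    (hKH : IsHolderBdd γ K)
    (F : ℝ → ℝ) (hF : ContDiff ℝ 1 F) (M : ℝ) (hM : ∀ x, |deriv F x| ≤ M) :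
    ∃ C > 0, ∀ f : Euc d → ℝ, IsHolderBdd γ f → Integrable f →
      IsHolderBdd γ (fun x => f x * F (∫ z, K (x - z) * f z)) ∧
      Integrable (fun x => f x * F (∫ z, K (x - z) * f z)) ∧
      cNorm γ (fun x => f x * F (∫ z, K (x - z) * f z)) ≤
        C * cNorm γ f * (1 + ∫ x, |f x|) := by
  have hM0 : 0 ≤ M := (abs_nonneg _).trans (hM 0)
  have hF_lip := abs_sub_le_of_abs_deriv_le (hF.differentiable one_ne_zero) hM
  have hSK : 0 ≤ supN K := supN_nonneg
  have hHK : 0 ≤ holdS γ K := holdS_nonneg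
  refine ⟨|F 0| + M * supN K + M * holdS γ K + 1, by positivity, fun f hf hfi => ?_⟩
  have hI : 0 ≤ ∫ x, |f x| := integral_nonneg fun _ => abs_nonneg _
  have hg (x) : |∫ z, K (x - z) * f z| ≤ supN K * ∫ x, |f x| :=
    abs_integral_mul_le (fun z => abs_le_supN hKH.1 _) hfi
  have hgH := abs_integral_comp_sub_mul_sub_le hKint.aestronglyMeasurable hKH hfi
  have hG := mul_nonneg hSK hI
  have hHg := mul_nonneg hHK hI
  refine ⟨isHolderBdd_mul_comp hF_lip hM0 hf hg hgH hG hHg,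
    hfi.mul_bdd
      (hF.continuous.comp (continuous_of_abs_sub_le_mul_rpow hγ.1 hgH)).aestronglyMeasurable
      (ae_of_all _ (abs_comp_le hF_lip hM0 hg)),
    (cNorm_mul_comp_le hF_lip hM0 hf hg hgH hG hHg).trans ?_⟩
  have hf0 : 0 ≤ cNorm γ f := add_nonneg supN_nonneg holdS_nonneg
  rw [mul_comm _ (cNorm γ f), mul_assoc]
  gcongr
  nlinarith [mul_nonneg (abs_nonneg (F 0)) hI, mul_nonneg hM0 hSK, mul_nonneg hM0 hHK]

/-- φ(f) = f·F(K*f) maps C^γ ∩ L¹ into itself with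
‖φ(f)‖_{C^γ} ≤ C‖f‖_{C^γ}(1 + ‖f‖_{L¹}). -/
theorem stmt17 {d : ℕ} (γ : ℝ) (hγ : γ ∈ Set.Ioo (0:ℝ) 1)
    (K : Euc d → ℝ) (hK0 : ∀ x, 0 ≤ K x) (hKint : Integrable K)
    (hK1 : (∫ x, K x) = 1) (hKH : IsHolderBdd γ K)
    (F : ℝ → ℝ) (hF : ContDiff ℝ 1 F) (M : ℝ) (hM : ∀ x, |deriv F x| ≤ M)
    (L : NNReal) (hL : LipschitzWith L (deriv F)) :
    ∃ C > 0, ∀ f : Euc d → ℝ, IsHolderBdd γ f → Integrable f →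
      IsHolderBdd γ (fun x => f x * F (∫ z, K (x - z) * f z)) ∧
      Integrable (fun x => f x * F (∫ z, K (x - z) * f z)) ∧
      cNorm γ (fun x => f x * F (∫ z, K (x - z) * f z)) ≤
        C * cNorm γ f * (1 + ∫ x, |f x|) :=
  stmt17_general γ hγ K hKint hKH F hF M hM
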